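/- arXiv:1912.11354 — 3 statements merged into one kernel-verified Lean document; each statement's English description precedes it below -/
import Mathlib

section
/- Let (S, 𝒜, λ) be a measure space and let (f_i)_{i∈I} be an orthonormal family in L²(S, λ; ℂ). For each i let B_i be a measurable set of finite λ-measure such that f_i = 0 λ-a.e. outside B_i. Let m ≥ 1 and let A_1, …, A_m ⊆ S be measurable sets such that for every i ∈ I and every n, either B_i ⊆ A_n or λ(B_i ∩ A_n) = 0. Let F ⊆ I be a finite set, let c : F × F → ℂ, and define the finite-rank kernel K'(x,y) := Σ_{i,j ∈ F} c(i,j) · f_i(x) · conj(f_j(y)). Then for every permutation σ of {1,…,m}: ∫_{A_1×⋯×A_m} ∏_{p=1}^m K'(x_p, x_{σ(p)}) dλ(x_1)⋯dλ(x_m) = Σ ∏_{p=1}^m c(i_p, i_{σ(p)}), where the sum on the right extends over all m-tuples (i_1,…,i_m) ∈ F^m such that B_{i_p} ⊆ A_p for every p. -/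
open MeasureTheory Classical

section Aux

open Set Function

variable {ι : Type*} [Fintype ι] {α : ι → Type*} [∀ i, MeasurableSpace (α i)]

/-- Unconditional version of `pi_eval_preimage_null` (no sigma-finiteness needed). -/
lemma pi_eval_preimage_null' (ν : ∀ i, Measure (α i)) {i : ι} {s : Set (α i)}
    (hs : ν i s = 0) : Measure.pi ν (eval i ⁻¹' s) = 0 := by
  classical
  rcases exists_measurable_superset_of_null hs with ⟨t, hst, htm, ht0⟩
  refine measure_mono_null (Set.preimage_mono hst) ?_
  rw [← Set.univ_pi_update_univ]
  have hmeas : MeasurableSet (Set.pi Set.univ (update (fun j => (univ : Set (α j))) i t)) := by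
    refine MeasurableSet.univ_pi fun j => ?_
    by_cases h : j = i
    · subst h; simpa using htm
    · simp [Function.update_of_ne h]
  refine le_antisymm ?_ (zero_le)
  rw [Measure.pi_def, toMeasure_apply _ _ hmeas]
  refine le_trans (OuterMeasure.pi_pi_le _ _) ?_
  refine le_of_eq (Finset.prod_eq_zero (Finset.mem_univ i) ?_)
  simp [ht0]

/-- Restricting a product measure to a measurable cylinder is the same as restricting each
factor, without any sigma-finiteness assumption. -/
lemma pi_restrict_cylinder (ν : ∀ i, Measure (α i)) (U : ∀ i, Set (α i))
    (hU : ∀ i, MeasurableSet (U i)) :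
    (Measure.pi ν).restrict (Set.pi Set.univ U) =
      (Measure.pi fun i => (ν i).restrict (U i)).restrict (Set.pi Set.univ U) := by
  classical
  have hC : MeasurableSet (Set.pi Set.univ U) := MeasurableSet.univ_pi hU
  have hle : (Measure.pi fun i => (ν i).restrict (U i)) ≤ Measure.pi ν := by
    refine Measure.le_iff.2 fun E hE => ?_
    rw [Measure.pi_def, toMeasure_apply _ _ hE, Measure.pi_def, toMeasure_apply _ _ hE]
    refine OuterMeasure.le_boundedBy.2 (fun s => ?_) E
    refine le_trans (OuterMeasure.boundedBy_le _) ?_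
    refine Finset.prod_le_prod' fun j _ => ?_
    exact Measure.restrict_le_self _
  have hkey : ∀ s : Set (∀ i, α i),
      Measure.pi ν (s ∩ Set.pi Set.univ U) ≤
        piPremeasure (fun i => ((ν i).restrict (U i)).toOuterMeasure) s := by
    intro s
    set t : ∀ i, Set (α i) := fun i => toMeasurable ((ν i).restrict (U i)) (eval i '' s) with ht
    have htm : ∀ i, MeasurableSet (t i) := fun i => measurableSet_toMeasurable _ _
    have hsub : s ∩ Set.pi Set.univ U ⊆ Set.pi Set.univ fun i => t i ∩ U i := by
      intro x hx j _
      exact ⟨subset_toMeasurable _ _ ⟨x, hx.1, rfl⟩, hx.2 j (mem_univ j)⟩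
    refine le_trans (measure_mono hsub) ?_
    have hmeas : MeasurableSet (Set.pi Set.univ fun i => t i ∩ U i) :=
      MeasurableSet.univ_pi fun i => (htm i).inter (hU i)
    rw [Measure.pi_def, toMeasure_apply _ _ hmeas]
    refine le_trans (OuterMeasure.pi_pi_le _ _) ?_
    refine Finset.prod_le_prod' fun j _ => ?_
    have : ν j (t j ∩ U j) = (ν j).restrict (U j) (t j) := by
      rw [Measure.restrict_apply (htm j)]
    rw [show ((ν j).toOuterMeasure) (t j ∩ U j) = ν j (t j ∩ U j) from rfl, this,
      measure_toMeasurable]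
    rfl
  ext E hE
  rw [Measure.restrict_apply hE, Measure.restrict_apply hE]
  refine le_antisymm ?_ (Measure.le_iff'.1 hle _)
  have houter : ((Measure.pi ν).restrict (Set.pi Set.univ U)).toOuterMeasure ≤
      OuterMeasure.pi (fun i => ((ν i).restrict (U i)).toOuterMeasure) :=
    OuterMeasure.le_boundedBy.2 fun s => by
      rw [show ((Measure.pi ν).restrict (Set.pi Set.univ U)).toOuterMeasure s
            = (Measure.pi ν).restrict (Set.pi Set.univ U) s from rfl,
        Measure.restrict_apply' hC]
      exact hkey s
  have := houter (E ∩ Set.pi Set.univ U)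
  rw [show ((Measure.pi ν).restrict (Set.pi Set.univ U)).toOuterMeasure (E ∩ Set.pi Set.univ U)
        = (Measure.pi ν).restrict (Set.pi Set.univ U) (E ∩ Set.pi Set.univ U) from rfl,
    Measure.restrict_apply' hC, Set.inter_assoc, Set.inter_self] at this
  refine this.trans (le_of_eq ?_)
  rw [Measure.pi_def, toMeasure_apply _ _ (hE.inter hC)]

/-- Fubini for a product of single-coordinate functions, with explicit measures. -/
lemma integral_pi_prod' {m : ℕ} {S : Type*} [ms : MeasurableSpace S] (ν : Fin m → Measure S)
    (hν : ∀ p, SigmaFinite (ν p)) (g : Fin m → S → ℂ) :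
    ∫ x : Fin m → S, ∏ p, g p (x p) ∂Measure.pi ν = ∏ p, ∫ y, g p y ∂ν p :=
  by haveI := hν; exact MeasureTheory.integral_fintype_prod_eq_prod (μ := ν) g

lemma integrable_pi_prod' {m : ℕ} {S : Type*} [ms : MeasurableSpace S] (ν : Fin m → Measure S)
    (hν : ∀ p, SigmaFinite (ν p)) (g : Fin m → S → ℂ) (hg : ∀ p, Integrable (g p) (ν p)) :
    Integrable (fun x : Fin m → S => ∏ p, g p (x p)) (Measure.pi ν) :=
  by haveI := hν; exact MeasureTheory.Integrable.fintype_prod_dep (μ := ν) hg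

/-- The basic orthogonality computation for a single coordinate. -/
lemma key_integral {S : Type*} [MeasurableSpace S] (μ : Measure S)
    {I : Type*} (f : I → S → ℂ)
    (hnorm : ∀ i, ∫ x, ‖f i x‖ ^ 2 ∂μ = 1)
    (horth : ∀ i j, i ≠ j → ∫ x, f i x * (starRingEnd ℂ) (f j x) ∂μ = 0)
    (B : I → Set S) (hsupp : ∀ i, ∀ᵐ x ∂μ, x ∉ B i → f i x = 0)
    (A U : Set S) (hA : MeasurableSet A) (hU : MeasurableSet U)
    (i j : I) (hiU : B i ⊆ U) (hjU : B j ⊆ U)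
    (hci : B i ⊆ A ∨ μ (B i ∩ A) = 0) (hcj : B j ⊆ A ∨ μ (B j ∩ A) = 0) :
    ∫ y in U ∩ A, (B i).indicator (f i) y * (starRingEnd ℂ) ((B j).indicator (f j) y) ∂μ
      = if i = j ∧ B i ⊆ A then 1 else 0 := by
  have hfae : ∀ k, (B k).indicator (f k) =ᵐ[μ] f k := by
    intro k
    filter_upwards [hsupp k] with y hy
    by_cases hyB : y ∈ B k
    · rw [indicator_of_mem hyB]
    · rw [indicator_of_notMem hyB, hy hyB]
  have hzero : ∀ k : I, μ (B k ∩ A) = 0 →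
      (∀ y, y ∉ B k → (B i).indicator (f i) y * (starRingEnd ℂ) ((B j).indicator (f j) y) = 0) →
      ∫ y in U ∩ A, (B i).indicator (f i) y * (starRingEnd ℂ) ((B j).indicator (f j) y) ∂μ
        = 0 := by
    intro k hk hvan
    rw [← integral_indicator (hU.inter hA)]
    apply integral_eq_zero_of_ae
    filter_upwards [measure_eq_zero_iff_ae_notMem.1 hk] with y hy
    by_cases hyU : y ∈ U ∩ A
    · rw [indicator_of_mem hyU]
      have hyB : y ∉ B k := fun hkB => hy ⟨hkB, hyU.2⟩
      exact hvan y hyB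
    · rw [indicator_of_notMem hyU]; rfl
  by_cases hBi : B i ⊆ A
  · by_cases hBj : B j ⊆ A
    · have hout : ∀ y, y ∉ U ∩ A →
          (B i).indicator (f i) y * (starRingEnd ℂ) ((B j).indicator (f j) y) = 0 := by
        intro y hy
        have hyB : y ∉ B i := fun h => hy ⟨hiU h, hBi h⟩
        rw [indicator_of_notMem hyB, zero_mul]
      rw [setIntegral_eq_integral_of_forall_compl_eq_zero hout]
      have heq : ∫ y, (B i).indicator (f i) y * (starRingEnd ℂ) ((B j).indicator (f j) y) ∂μ
          = ∫ y, f i y * (starRingEnd ℂ) (f j y) ∂μ := by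
        refine integral_congr_ae ?_
        filter_upwards [hfae i, hfae j] with y h1 h2
        rw [h1, h2]
      rw [heq]
      by_cases hij : i = j
      · subst hij
        rw [if_pos ⟨rfl, hBi⟩]
        simp_rw [RCLike.mul_conj (K := ℂ), ← RCLike.ofReal_pow]
        rw [integral_ofReal, hnorm i]
        norm_num
      · rw [horth i j hij, if_neg (fun h => hij h.1)]
    · have hk : μ (B j ∩ A) = 0 := hcj.resolve_left hBj
      rw [hzero j hk fun y hy => by rw [indicator_of_notMem hy, map_zero, mul_zero]]
      rw [if_neg]
      rintro ⟨rfl, hsub⟩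
      exact hBj hsub
  · have hk : μ (B i ∩ A) = 0 := hci.resolve_left hBi
    rw [hzero i hk fun y hy => by rw [indicator_of_notMem hy, zero_mul]]
    rw [if_neg (fun h => hBi h.2)]

end Aux

/-- Computation (3.16)–(3.17) in the proof of Theorem 2.1: for the finite-rank kernel
`K'(x,y) = Σ_{i,j ∈ F} c(i,j) f_i(x) conj(f_j(y))` built from an orthonormal family whose
supports `B i` are compatible with the sets `A_n`, and any permutation `σ` of `{1,…,m}`,
the integral of `∏_p K'(x_p, x_{σ(p)})` over `A_1 × ⋯ × A_m` equals the sum of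
`∏_p c(i_p, i_{σ(p)})` over tuples `(i_1,…,i_m) ∈ F^m` with `B_{i_p} ⊆ A_p` for all `p`. -/
theorem stmt_10
    {S : Type*} [MeasurableSpace S] (μ : Measure S)
    {I : Type*} (f : I → S → ℂ) (hf : ∀ i, MemLp (f i) 2 μ)
    (hnorm : ∀ i, ∫ x, ‖f i x‖ ^ 2 ∂μ = 1)
    (horth : ∀ i j, i ≠ j → ∫ x, f i x * (starRingEnd ℂ) (f j x) ∂μ = 0)
    (B : I → Set S) (hB : ∀ i, MeasurableSet (B i)) (hBfin : ∀ i, μ (B i) < ⊤)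
    (hsupp : ∀ i, ∀ᵐ x ∂μ, x ∉ B i → f i x = 0)
    (m : ℕ) (hm : 1 ≤ m)
    (A : Fin m → Set S) (hA : ∀ n, MeasurableSet (A n))
    (hcompat : ∀ i n, B i ⊆ A n ∨ μ (B i ∩ A n) = 0)
    (F : Finset I) (c : I → I → ℂ) (σ : Equiv.Perm (Fin m)) :
    ∫ x : Fin m → S,
        ∏ p, (∑ i ∈ F, ∑ j ∈ F, c i j * f i (x p) * (starRingEnd ℂ) (f j (x (σ p))))
        ∂(Measure.pi fun p => μ.restrict (A p))
      = ∑ i ∈ (Fintype.piFinset fun _ : Fin m => F).filter (fun i => ∀ p, B (i p) ⊆ A p),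
          ∏ p, c (i p) (i (σ p)) := by
  classical
  set f' : I → S → ℂ := fun i => (B i).indicator (f i) with hf'def
  set U : Set S := ⋃ i ∈ F, B i with hUdef
  have hUmeas : MeasurableSet U := F.measurableSet_biUnion (fun i _ => hB i)
  have hUfin : μ U < ⊤ := measure_biUnion_lt_top F.finite_toSet (fun i _ => hBfin i)
  have hBU : ∀ i ∈ F, B i ⊆ U := fun i hi => Set.subset_biUnion_of_mem hi
  have hfae : ∀ k, f' k =ᵐ[μ] f k := by
    intro k
    filter_upwards [hsupp k] with y hy
    show (B k).indicator (f k) y = f k y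
    by_cases hyB : y ∈ B k
    · exact Set.indicator_of_mem hyB _
    · rw [Set.indicator_of_notMem hyB, hy hyB]
  set π : Measure (Fin m → S) := Measure.pi fun p => μ.restrict (A p) with hπdef
  set ν' : Fin m → Measure S := fun p => (μ.restrict (A p)).restrict U with hν'def
  haveI hfin : ∀ p, IsFiniteMeasure (ν' p) := by
    intro p
    refine ⟨?_⟩
    rw [hν'def]
    simp only [Measure.restrict_apply_univ]
    calc μ.restrict (A p) U = μ (U ∩ A p) := Measure.restrict_apply hUmeas
      _ ≤ μ U := measure_mono Set.inter_subset_left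
      _ < ⊤ := hUfin
  have hsf : ∀ p, SigmaFinite (ν' p) := fun p => inferInstance
  set C : Set (Fin m → S) := Set.pi Set.univ (fun _ => U) with hCdef
  -- Step 1 : replace `f` by `f'`
  have step1 : ∫ x : Fin m → S,
      ∏ p, (∑ i ∈ F, ∑ j ∈ F, c i j * f i (x p) * (starRingEnd ℂ) (f j (x (σ p)))) ∂π
      = ∫ x : Fin m → S,
      ∏ p, (∑ i ∈ F, ∑ j ∈ F, c i j * f' i (x p) * (starRingEnd ℂ) (f' j (x (σ p)))) ∂π := by
    refine integral_congr_ae ?_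
    set N : Set S := ⋃ i ∈ F, {y | f' i y ≠ f i y} with hNdef
    have hN : μ N = 0 := by
      refine (measure_biUnion_null_iff F.countable_toSet).2 fun i _ => ?_
      exact (hfae i)
    have hae : ∀ᵐ x ∂π, ∀ p, x p ∉ N := by
      rw [ae_all_iff]
      intro p
      have hN0 : μ.restrict (A p) N = 0 :=
        le_antisymm (le_trans (Measure.restrict_le_self _) hN.le) (zero_le)
      refine ae_iff.2 ?_
      have := pi_eval_preimage_null' (fun p => μ.restrict (A p)) (i := p) hN0
      simp only [not_not]
      exact this
    filter_upwards [hae] with x hx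
    have hxval : ∀ p, ∀ i ∈ F, f i (x p) = f' i (x p) := by
      intro p i hi
      by_contra h
      exact hx p (Set.mem_biUnion hi (fun h' => h h'.symm))
    refine Finset.prod_congr rfl fun p _ => ?_
    refine Finset.sum_congr rfl fun i hi => Finset.sum_congr rfl fun j hj => ?_
    rw [hxval p i hi, hxval (σ p) j hj]
  rw [step1]
  -- Step 2 : the integrand (with `f'`) vanishes off the cylinder `C`
  have hvan : ∀ x : Fin m → S, x ∉ C →
      ∏ p, (∑ i ∈ F, ∑ j ∈ F, c i j * f' i (x p) * (starRingEnd ℂ) (f' j (x (σ p)))) = 0 := by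
    intro x hx
    rw [hCdef, Set.mem_univ_pi] at hx
    push_neg at hx
    obtain ⟨p, hpU⟩ := hx
    refine Finset.prod_eq_zero (Finset.mem_univ p) ?_
    refine Finset.sum_eq_zero fun i hi => Finset.sum_eq_zero fun j hj => ?_
    have : f' i (x p) = 0 := Set.indicator_of_notMem (fun hmem => hpU (hBU i hi hmem)) _
    rw [this, mul_zero, zero_mul]
  have step2 : ∫ x : Fin m → S,
      ∏ p, (∑ i ∈ F, ∑ j ∈ F, c i j * f' i (x p) * (starRingEnd ℂ) (f' j (x (σ p)))) ∂π
      = ∫ x : Fin m → S,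
      ∏ p, (∑ i ∈ F, ∑ j ∈ F, c i j * f' i (x p) * (starRingEnd ℂ) (f' j (x (σ p))))
        ∂(Measure.pi ν') := by
    rw [← setIntegral_eq_integral_of_forall_compl_eq_zero (s := C) hvan]
    rw [hπdef, hCdef]
    rw [pi_restrict_cylinder (fun p => μ.restrict (A p)) (fun _ => U) (fun _ => hUmeas)]
    exact setIntegral_eq_integral_of_forall_compl_eq_zero (s := C) hvan
  rw [step2]
  -- Step 3 : expand the product of sums
  have expand : ∀ x : Fin m → S,
      ∏ p, (∑ i ∈ F, ∑ j ∈ F, c i j * f' i (x p) * (starRingEnd ℂ) (f' j (x (σ p))))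
      = ∑ d ∈ Fintype.piFinset (fun _ : Fin m => F ×ˢ F),
          (∏ p, c (d p).1 (d p).2) *
            ∏ p, (f' (d p).1 (x p) * (starRingEnd ℂ) (f' (d (σ⁻¹ p)).2 (x p))) := by
    intro x
    have h1 : ∀ p : Fin m,
        (∑ i ∈ F, ∑ j ∈ F, c i j * f' i (x p) * (starRingEnd ℂ) (f' j (x (σ p))))
        = ∑ q ∈ F ×ˢ F, c q.1 q.2 * f' q.1 (x p) * (starRingEnd ℂ) (f' q.2 (x (σ p))) := by
      intro p
      rw [Finset.sum_product]
    simp_rw [h1]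
    rw [Finset.prod_univ_sum]
    refine Finset.sum_congr rfl fun d _ => ?_
    rw [Finset.prod_mul_distrib, Finset.prod_mul_distrib]
    have h2 : (∏ p, (starRingEnd ℂ) (f' (d p).2 (x (σ p))))
        = ∏ p, (starRingEnd ℂ) (f' (d (σ⁻¹ p)).2 (x p)) := by
      have := Equiv.prod_comp σ (fun q => (starRingEnd ℂ) (f' (d (σ⁻¹ q)).2 (x q)))
      simp only [Equiv.Perm.coe_inv, Equiv.symm_apply_apply] at this
      exact this
    rw [h2, mul_assoc, ← Finset.prod_mul_distrib]
  simp_rw [expand]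
  -- Step 4 : integrability
  have hmemf' : ∀ k, MemLp (f' k) 2 μ := fun k => (hf k).ae_eq (hfae k).symm
  have hint : ∀ a b : I, ∀ p : Fin m,
      Integrable (fun y => f' a y * (starRingEnd ℂ) (f' b y)) (ν' p) := by
    intro a b p
    have ha : MemLp (f' a) 2 (ν' p) := ((hmemf' a).restrict _).restrict _
    have hbb : MemLp (f' b) 2 (ν' p) := ((hmemf' b).restrict _).restrict _
    have hb : MemLp (fun y => (starRingEnd ℂ) (f' b y)) 2 (ν' p) := by
      refine ⟨RCLike.continuous_conj.comp_aestronglyMeasurable hbb.1, ?_⟩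
      have : eLpNorm (fun y => (starRingEnd ℂ) (f' b y)) 2 (ν' p) = eLpNorm (f' b) 2 (ν' p) :=
        eLpNorm_congr_norm_ae (Filter.Eventually.of_forall fun y => by
          simp [RCLike.norm_conj])
      rw [this]
      exact hbb.2
    have h12 : (1 : ENNReal) / 1 = 1 / 2 + 1 / 2 := by
      rw [one_div, one_div, ENNReal.inv_two_add_inv_two]
      simp
    have := hb.smul (r := 1) ha
    rw [memLp_one_iff_integrable] at this
    exact this
  have hintd : ∀ d ∈ Fintype.piFinset (fun _ : Fin m => F ×ˢ F),
      Integrable (fun x : Fin m → S => (∏ p, c (d p).1 (d p).2) *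
          ∏ p, (f' (d p).1 (x p) * (starRingEnd ℂ) (f' (d (σ⁻¹ p)).2 (x p))))
        (Measure.pi ν') := by
    intro d _
    exact (integrable_pi_prod' ν' hsf
      (fun p y => f' (d p).1 y * (starRingEnd ℂ) (f' (d (σ⁻¹ p)).2 y))
      (fun p => hint _ _ p)).const_mul _
  rw [integral_finset_sum _ hintd]
  -- Step 5 : compute each integral
  have hval : ∀ d ∈ Fintype.piFinset (fun _ : Fin m => F ×ˢ F), ∀ p : Fin m,
      ∫ y, f' (d p).1 y * (starRingEnd ℂ) (f' (d (σ⁻¹ p)).2 y) ∂ν' p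
        = if (d p).1 = (d (σ⁻¹ p)).2 ∧ B (d p).1 ⊆ A p then 1 else 0 := by
    intro d hd p
    have hdp := Fintype.mem_piFinset.1 hd
    have h1 : (d p).1 ∈ F := (Finset.mem_product.1 (hdp p)).1
    have h2 : (d (σ⁻¹ p)).2 ∈ F := (Finset.mem_product.1 (hdp (σ⁻¹ p))).2
    have hre : ν' p = μ.restrict (U ∩ A p) := Measure.restrict_restrict hUmeas
    rw [hre]
    exact key_integral μ f hnorm horth B hsupp (A p) U (hA p) hUmeas _ _
      (hBU _ h1) (hBU _ h2) (hcompat _ p) (hcompat _ p)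
  have hterm : ∀ d ∈ Fintype.piFinset (fun _ : Fin m => F ×ˢ F),
      ∫ x : Fin m → S, (∏ p, c (d p).1 (d p).2) *
          ∏ p, (f' (d p).1 (x p) * (starRingEnd ℂ) (f' (d (σ⁻¹ p)).2 (x p))) ∂(Measure.pi ν')
      = if (∀ p, (d p).1 = (d (σ⁻¹ p)).2 ∧ B (d p).1 ⊆ A p)
          then (∏ p, c (d p).1 (d p).2) else 0 := by
    intro d hd
    rw [integral_const_mul]
    rw [integral_pi_prod' ν' hsf
      (fun p y => f' (d p).1 y * (starRingEnd ℂ) (f' (d (σ⁻¹ p)).2 y))]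
    by_cases hall : ∀ p, (d p).1 = (d (σ⁻¹ p)).2 ∧ B (d p).1 ⊆ A p
    · rw [if_pos hall]
      have : (∏ p, ∫ y, f' (d p).1 y * (starRingEnd ℂ) (f' (d (σ⁻¹ p)).2 y) ∂ν' p) = 1 :=
        Finset.prod_eq_one fun p _ => by rw [hval d hd p, if_pos (hall p)]
      rw [this, mul_one]
    · rw [if_neg hall]
      obtain ⟨p, hp⟩ := not_forall.1 hall
      have : (∏ p, ∫ y, f' (d p).1 y * (starRingEnd ℂ) (f' (d (σ⁻¹ p)).2 y) ∂ν' p) = 0 :=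
        Finset.prod_eq_zero (Finset.mem_univ p) (by rw [hval d hd p, if_neg hp])
      rw [this, mul_zero]
  rw [Finset.sum_congr rfl hterm]
  rw [← Finset.sum_filter]
  -- Step 6 : reindex
  refine Finset.sum_bij' (i := fun d _ => fun p => (d p).1)
    (j := fun i _ => fun p => (i p, i (σ p))) ?_ ?_ ?_ ?_ ?_
  · intro d hd
    rw [Finset.mem_filter] at hd ⊢
    obtain ⟨hd1, hd2⟩ := hd
    constructor
    · exact Fintype.mem_piFinset.2 fun p => (Finset.mem_product.1 (Fintype.mem_piFinset.1 hd1 p)).1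
    · intro p
      exact (hd2 p).2
  · intro i hi
    rw [Finset.mem_filter] at hi ⊢
    obtain ⟨hi1, hi2⟩ := hi
    constructor
    · refine Fintype.mem_piFinset.2 fun p => Finset.mem_product.2 ?_
      exact ⟨Fintype.mem_piFinset.1 hi1 p, Fintype.mem_piFinset.1 hi1 (σ p)⟩
    · intro p
      refine ⟨?_, hi2 p⟩
      show i p = i (σ (σ⁻¹ p))
      rw [Equiv.Perm.coe_inv, Equiv.apply_symm_apply]
  · intro d hd
    rw [Finset.mem_filter] at hd
    funext p
    show ((d p).1, (d (σ p)).1) = d p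
    have h1 : (d (σ p)).1 = (d p).2 := by
      have := (hd.2 (σ p)).1
      rwa [Equiv.Perm.coe_inv, Equiv.symm_apply_apply] at this
    rw [h1]
  · intro i hi
    funext p
    rfl
  · intro d hd
    rw [Finset.mem_filter] at hd
    refine Finset.prod_congr rfl fun p _ => ?_
    have h1 : (d (σ p)).1 = (d p).2 := by
      have := (hd.2 (σ p)).1
      rwa [Equiv.Perm.coe_inv, Equiv.symm_apply_apply] at this
    show c (d p).1 (d p).2 = c (d p).1 ((d (σ p)).1)
    rw [h1]
end

section
/- Let (S, 𝒜, λ) be a measure space and let (f_i)_{i∈I} be an orthonormal family in L²(S, λ; ℂ). For each i let B_i be a measurable set of finite λ-measure such that f_i = 0 λ-a.e. outside B_i. Let m ≥ 1 and let A_1, …, A_m ⊆ S be measurable sets such that for every i ∈ I and every n, either B_i ⊆ A_n or λ(B_i ∩ A_n) = 0. Let F ⊆ I be a finite set, let c : F × F → ℂ, and define K'(x,y) := Σ_{i,j ∈ F} c(i,j) · f_i(x) · conj(f_j(y)). Then for every real number α: ∫_{A_1×⋯×A_m} det_α[(K'(x_p, x_q))_{p,q=1}^m] dλ(x_1)⋯dλ(x_m)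 = Σ det_α[(c(i_p, i_q))_{p,q=1}^m], where the sum on the right extends over all m-tuples (i_1,…,i_m) ∈ F^m with B_{i_p} ⊆ A_p for every p. -/
/-!
Expand the α-determinant over permutations `σ` and then multilinearly in the kernel: each term
becomes a product over `p` of one-variable integrals `∫_{A_p} f_i conj f_j`, which by
orthonormality and support compatibility equal `1` if `i = j` and `B_i ⊆ A_p`, and `0` otherwise.
These Kronecker deltas force the second index tuple to be `i ∘ σ`, leaving `∏_p c(i_p, i_{σ p})`,
and resumming over `σ` gives `det_α` of the coefficient matrix. The measures `μ|A_p` need not be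
σ-finite, so the integral is first moved to the box `U^m`, `U = ⋃_{i ∈ F} B_i`, of finite measure,
outside of which the integrand vanishes almost everywhere.
-/

open MeasureTheory Classical

/-- The α-determinant: `det_α A = Σ_{σ ∈ S_n} α^{n − ν(σ)} ∏_p A p (σ p)`, where `ν(σ)` is the
number of cycles of `σ` (fixed points counted as cycles), so that
`n − ν(σ) = |support σ| − (number of non-trivial cycles of σ)`. -/
noncomputable def alphaDet {n : Type*} [DecidableEq n] [Fintype n]
    (α : ℝ) (M : Matrix n n ℂ) : ℂ :=
  ∑ σ : Equiv.Perm n,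
    (α : ℂ) ^ (Fintype.card n -
        (Multiset.card σ.cycleType + (Fintype.card n - σ.support.card))) *
      ∏ p, M p (σ p)

namespace MeasureTheory.Measure

variable {ι : Type*} [Fintype ι] {X : ι → Type*} [∀ i, MeasurableSpace (X i)]

theorem pi_pi_le (μ : ∀ i, Measure (X i)) {s : ∀ i, Set (X i)} (hs : ∀ i, MeasurableSet (s i)) :
    Measure.pi μ (Set.univ.pi s) ≤ ∏ i, μ i (s i) := by
  rw [Measure.pi_def, toMeasure_apply _ _ (MeasurableSet.univ_pi hs)]
  simpa using OuterMeasure.pi_pi_le (fun i => (μ i).toOuterMeasure) s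

theorem pi_mono {μ ν : ∀ i, Measure (X i)} (h : ∀ i, μ i ≤ ν i) :
    Measure.pi μ ≤ Measure.pi ν := by
  refine Measure.le_iff.2 fun s hs => ?_
  rw [Measure.pi_def, Measure.pi_def, toMeasure_apply _ _ hs, toMeasure_apply _ _ hs]
  refine OuterMeasure.le_boundedBy.2 (fun t => ?_) s
  exact (OuterMeasure.boundedBy_le t).trans
    (Finset.prod_le_prod' fun i _ => Measure.le_iff'.1 (h i) _)

theorem ae_eval_of_ae (μ : ∀ i, Measure (X i)) {i : ι} {P : X i → Prop}
    (h : ∀ᵐ y ∂μ i, P y) : ∀ᵐ x ∂Measure.pi μ, P (x i) := by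
  obtain ⟨t, hPt, ht, hμt⟩ := exists_measurable_superset_of_null (ae_iff.1 h)
  refine ae_iff.2 (measure_mono_null (t := Function.eval i ⁻¹' t) (fun x hx => hPt hx)
    (nonpos_iff_eq_zero.1 ?_))
  rw [← Set.univ_pi_update_univ]
  refine (pi_pi_le μ fun j => ?_).trans_eq (Finset.prod_eq_zero (Finset.mem_univ i) (by simp [hμt]))
  rcases eq_or_ne j i with rfl | hji
  · simpa using ht
  · simp [Function.update_of_ne hji]

theorem restrict_pi_pi_of_ne_top (μ : ∀ i, Measure (X i)) {U : ∀ i, Set (X i)}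
    (hU : ∀ i, MeasurableSet (U i)) (hfin : ∀ i, μ i (U i) ≠ ⊤) :
    (Measure.pi μ).restrict (Set.univ.pi U) = Measure.pi fun i => (μ i).restrict (U i) := by
  have : ∀ i, IsFiniteMeasure ((μ i).restrict (U i)) := fun i =>
    ⟨by simpa using (hfin i).lt_top⟩
  refine (Measure.pi_eq fun s hs => ?_).symm
  have hsU : ∀ i, MeasurableSet (s i ∩ U i) := fun i => (hs i).inter (hU i)
  rw [Measure.restrict_apply (MeasurableSet.univ_pi hs), ← Set.pi_inter_distrib]
  refine le_antisymm ?_ ?_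
  · simpa only [Measure.restrict_apply (hs _)] using pi_pi_le μ hsU
  · calc ∏ i, (μ i).restrict (U i) (s i)
        = Measure.pi (fun i => (μ i).restrict (U i)) (Set.univ.pi fun i => s i ∩ U i) := by
          simp only [Measure.pi_pi, Measure.restrict_apply (hsU _), Measure.restrict_apply (hs _),
            Set.inter_assoc, Set.inter_self]
      _ ≤ Measure.pi μ (Set.univ.pi fun i => s i ∩ U i) :=
          pi_mono (fun _ => Measure.restrict_le_self) _

end MeasureTheory.Measure

section

variable {ι : Type*} [Fintype ι] {X : ι → Type*} [∀ i, MeasurableSpace (X i)]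
  {E : Type*} [NormedAddCommGroup E] [NormedSpace ℝ E]

theorem integral_pi_eq_integral_pi_restrict (μ : ∀ i, Measure (X i)) {U : ∀ i, Set (X i)}
    (hU : ∀ i, MeasurableSet (U i)) (hfin : ∀ i, μ i (U i) ≠ ⊤) {Φ : (∀ i, X i) → E}
    (hΦ : ∀ᵐ x ∂Measure.pi μ, (∃ i, x i ∉ U i) → Φ x = 0) :
    ∫ x, Φ x ∂Measure.pi μ = ∫ x, Φ x ∂Measure.pi fun i => (μ i).restrict (U i) := by
  rw [← Measure.restrict_pi_pi_of_ne_top μ hU hfin, setIntegral_eq_integral_of_ae_compl_eq_zero]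
  filter_upwards [hΦ] with x hx hxU
  exact hx (by simpa [Set.mem_univ_pi] using hxU)

end

theorem alphaDet_eq_zero_of_row_eq_zero {n : Type*} [DecidableEq n] [Fintype n] (α : ℝ)
    {M : Matrix n n ℂ} {p : n} (h : ∀ q, M p q = 0) : alphaDet α M = 0 :=
  Finset.sum_eq_zero fun σ _ => by rw [Finset.prod_eq_zero (Finset.mem_univ p) (h (σ p)), mul_zero]

theorem ae_alphaDet_eq_zero_of_exists_notMem_biUnion {ι S I : Type*} [Fintype ι] [DecidableEq ι]
    [MeasurableSpace S] (ν : ι → Measure S) (F : Finset I) (c : I → I → ℂ) {f g : I → S → ℂ}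
    {B : I → Set S} (hsupp : ∀ p i, ∀ᵐ y ∂ν p, y ∉ B i → f i y = 0) (α : ℝ) :
    ∀ᵐ x ∂Measure.pi ν, (∃ p, x p ∉ ⋃ i ∈ F, B i) →
      alphaDet α (Matrix.of fun p q => ∑ i ∈ F, ∑ j ∈ F, c i j * f i (x p) * g j (x q)) = 0 := by
  have hrow : ∀ p, ∀ᵐ x ∂Measure.pi ν, ∀ i ∈ F, x p ∉ B i → f i (x p) = 0 := fun p =>
    Measure.ae_eval_of_ae ν (P := fun y => ∀ i ∈ F, y ∉ B i → f i y = 0)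
      ((Filter.eventually_all_finset F).2 fun i _ => hsupp p i)
  filter_upwards [ae_all_iff.2 hrow] with x hx ⟨p, hp⟩
  refine alphaDet_eq_zero_of_row_eq_zero α (p := p) fun q => ?_
  refine Finset.sum_eq_zero fun i hi => Finset.sum_eq_zero fun j _ => ?_
  rw [hx p i hi fun h => hp (Set.mem_biUnion hi h), mul_zero, zero_mul]

section FiniteRank

variable {ι I : Type*} [Fintype ι] [DecidableEq ι] (F : Finset I) (c : I → I → ℂ)
  (σ : Equiv.Perm ι)

theorem prod_sum_sum_mul_mul (a b : I → ι → ℂ) :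
    ∏ p, ∑ i ∈ F, ∑ j ∈ F, c i j * a i p * b j (σ p)
      = ∑ d ∈ Fintype.piFinset (fun _ => F), ∑ e ∈ Fintype.piFinset (fun _ => F),
          (∏ p, c (d p) (e p)) * ∏ p, a (d p) p * b (e (σ.symm p)) p := by
  rw [Finset.prod_univ_sum]
  refine Finset.sum_congr rfl fun d _ => ?_
  rw [Finset.prod_univ_sum]
  refine Finset.sum_congr rfl fun e _ => ?_
  rw [Finset.prod_mul_distrib, Finset.prod_mul_distrib, Finset.prod_mul_distrib,
    ← Equiv.prod_comp σ (fun p => b (e (σ.symm p)) p)]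
  simp only [Equiv.symm_apply_apply]
  ring

theorem sum_sum_prod_mul_prod_eq_sum_filter (P : ι → I → Prop)
    [DecidablePred fun d : ι → I => ∀ p, P p (d p)] (G : ι → I → I → ℂ)
    (hG : ∀ p, ∀ i ∈ F, ∀ j, G p i j = if i = j ∧ P p i then 1 else 0) :
    ∑ d ∈ Fintype.piFinset (fun _ => F), ∑ e ∈ Fintype.piFinset (fun _ => F),
        (∏ p, c (d p) (e p)) * ∏ p, G p (d p) (e (σ.symm p))
      = ∑ d ∈ (Fintype.piFinset fun _ => F).filter (fun d => ∀ p, P p (d p)),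
          ∏ p, c (d p) (d (σ p)) := by
  rw [Finset.sum_filter]
  refine Finset.sum_congr rfl fun d hd => ?_
  have hdF : ∀ p, d p ∈ F := Fintype.mem_piFinset.1 hd
  have hmatch : ∀ e : ι → I,
      (∀ p, d p = e (σ.symm p) ∧ P p (d p)) ↔ e = d ∘ σ ∧ ∀ p, P p (d p) := by
    intro e
    simp only [forall_and, funext_iff, Function.comp_apply]
    exact and_congr_left' ⟨fun h q => by simpa using (h (σ q)).symm,
      fun h p => by simpa using (h (σ.symm p)).symm⟩
  simp_rw [fun p => hG p (d p) (hdF p), Fintype.prod_boole, hmatch, ite_and, mul_ite, mul_one,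
    mul_zero]
  rw [Finset.sum_ite_eq', if_pos (Fintype.mem_piFinset.2 fun q => hdF (σ q) :
    d ∘ σ ∈ Fintype.piFinset fun _ => F)]
  rfl

end FiniteRank

section ProductIntegral

variable {ι I S : Type*} [Fintype ι] [DecidableEq ι] [MeasurableSpace S] (ν : ι → Measure S)
  [∀ p, SigmaFinite (ν p)] (F : Finset I) (c : I → I → ℂ) (σ : Equiv.Perm ι) {g h : I → S → ℂ}

theorem integrable_prod_sum_sum_mul_mul (hgh : ∀ p i j, Integrable (fun z => g i z * h j z) (ν p)) :
    Integrable (fun x : ι → S => ∏ p, ∑ i ∈ F, ∑ j ∈ F, c i j * g i (x p) * h j (x (σ p)))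
      (Measure.pi ν) := by
  simp_rw [fun x : ι → S =>
    prod_sum_sum_mul_mul F c σ (fun i p => g i (x p)) (fun j p => h j (x p))]
  exact integrable_finsetSum _ fun d _ => integrable_finsetSum _ fun e _ =>
    (Integrable.fintype_prod (f := fun p z => g (d p) z * h (e (σ.symm p)) z)
      fun p => hgh _ _ _).const_mul _

theorem integral_prod_sum_sum_mul_mul (hgh : ∀ p i j, Integrable (fun z => g i z * h j z) (ν p)) :
    ∫ x : ι → S, ∏ p, ∑ i ∈ F, ∑ j ∈ F, c i j * g i (x p) * h j (x (σ p)) ∂Measure.pi ν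
      = ∑ d ∈ Fintype.piFinset (fun _ => F), ∑ e ∈ Fintype.piFinset (fun _ => F),
          (∏ p, c (d p) (e p)) * ∏ p, ∫ z, g (d p) z * h (e (σ.symm p)) z ∂ν p := by
  have hterm : ∀ d e : ι → I, Integrable (fun x : ι → S =>
      (∏ p, c (d p) (e p)) * ∏ p, g (d p) (x p) * h (e (σ.symm p)) (x p)) (Measure.pi ν) :=
    fun d e => (Integrable.fintype_prod (f := fun p z => g (d p) z * h (e (σ.symm p)) z)
      fun p => hgh _ _ _).const_mul _
  simp_rw [fun x : ι → S =>
    prod_sum_sum_mul_mul F c σ (fun i p => g i (x p)) (fun j p => h j (x p))]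
  rw [integral_finsetSum _ fun d _ => integrable_finsetSum _ fun e _ => hterm d e]
  refine Finset.sum_congr rfl fun d _ => ?_
  rw [integral_finsetSum _ fun e _ => hterm d e]
  refine Finset.sum_congr rfl fun e _ => ?_
  rw [integral_const_mul, integral_fintype_prod_eq_prod
    (fun p z => g (d p) z * h (e (σ.symm p)) z)]

end ProductIntegral

theorem setIntegral_mul_conj_eq_ite {S I : Type*} [MeasurableSpace S] {μ : Measure S}
    {f : I → S → ℂ} {B : I → Set S} (hnorm : ∀ i, ∫ x, ‖f i x‖ ^ 2 ∂μ = 1)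
    (horth : ∀ i j, i ≠ j → ∫ x, f i x * (starRingEnd ℂ) (f j x) ∂μ = 0)
    (hsupp : ∀ i, ∀ᵐ x ∂μ, x ∉ B i → f i x = 0) {T : Set S} (hT : MeasurableSet T) {i : I}
    (hiT : B i ⊆ T ∨ μ (B i ∩ T) = 0) (j : I) :
    ∫ z in T, f i z * (starRingEnd ℂ) (f j z) ∂μ = if i = j ∧ B i ⊆ T then 1 else 0 := by
  by_cases hBT : B i ⊆ T
  · rw [setIntegral_eq_integral_of_ae_compl_eq_zero]
    · rcases eq_or_ne i j with rfl | hij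
      · rw [if_pos ⟨rfl, hBT⟩]
        simp_rw [Complex.mul_conj', ← Complex.ofReal_pow]
        rw [integral_complex_ofReal, hnorm, Complex.ofReal_one]
      · rw [horth i j hij, if_neg fun h => hij h.1]
    · filter_upwards [hsupp i] with z hz hzT
      rw [hz fun hzB => hzT (hBT hzB), zero_mul]
  · rw [if_neg fun h => hBT h.2]
    refine integral_eq_zero_of_ae ?_
    rw [Filter.EventuallyEq, ae_restrict_iff' hT]
    filter_upwards [hsupp i, measure_eq_zero_iff_ae_notMem.1 (hiT.resolve_left hBT)]
      with z hz hzBT hzT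
    simp [hz fun hzB => hzBT ⟨hzB, hzT⟩]

theorem integral_restrict_restrict_mul_conj_eq_ite {S I : Type*} [MeasurableSpace S]
    {μ : Measure S} {f : I → S → ℂ} {B : I → Set S} (hnorm : ∀ i, ∫ x, ‖f i x‖ ^ 2 ∂μ = 1)
    (horth : ∀ i j, i ≠ j → ∫ x, f i x * (starRingEnd ℂ) (f j x) ∂μ = 0)
    (hsupp : ∀ i, ∀ᵐ x ∂μ, x ∉ B i → f i x = 0) {A U : Set S} (hA : MeasurableSet A)
    (hU : MeasurableSet U) {i : I} (hiU : B i ⊆ U) (hiA : B i ⊆ A ∨ μ (B i ∩ A) = 0) (j : I) :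
    ∫ z, f i z * (starRingEnd ℂ) (f j z) ∂(μ.restrict A).restrict U
      = if i = j ∧ B i ⊆ A then 1 else 0 := by
  have hiT : B i ⊆ U ∩ A ∨ μ (B i ∩ (U ∩ A)) = 0 :=
    hiA.imp (Set.subset_inter hiU)
      (measure_mono_null (Set.inter_subset_inter_right _ Set.inter_subset_right))
  simp only [Measure.restrict_restrict hU,
    setIntegral_mul_conj_eq_ite hnorm horth hsupp (hU.inter hA) hiT j, Set.subset_inter_iff, hiU,
    true_and]

theorem stmt_11_general
    {S : Type*} [MeasurableSpace S] (μ : Measure S)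
    {I : Type*} (f : I → S → ℂ) (hf : ∀ i, MemLp (f i) 2 μ)
    (hnorm : ∀ i, ∫ x, ‖f i x‖ ^ 2 ∂μ = 1)
    (horth : ∀ i j, i ≠ j → ∫ x, f i x * (starRingEnd ℂ) (f j x) ∂μ = 0)
    (B : I → Set S) (hB : ∀ i, MeasurableSet (B i)) (hBfin : ∀ i, μ (B i) < ⊤)
    (hsupp : ∀ i, ∀ᵐ x ∂μ, x ∉ B i → f i x = 0)
    (m : ℕ)
    (A : Fin m → Set S) (hA : ∀ n, MeasurableSet (A n))
    (hcompat : ∀ i n, B i ⊆ A n ∨ μ (B i ∩ A n) = 0)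
    (F : Finset I) (c : I → I → ℂ) (α : ℝ) :
    ∫ x : Fin m → S,
        alphaDet α (Matrix.of fun p q : Fin m =>
          ∑ i ∈ F, ∑ j ∈ F, c i j * f i (x p) * (starRingEnd ℂ) (f j (x q)))
        ∂(Measure.pi fun p => μ.restrict (A p))
      = ∑ i ∈ (Fintype.piFinset fun _ : Fin m => F).filter (fun i => ∀ p, B (i p) ⊆ A p),
          alphaDet α (Matrix.of fun p q : Fin m => c (i p) (i q)) := by
  set U := ⋃ i ∈ F, B i
  have hU : MeasurableSet U := F.measurableSet_biUnion fun i _ => hB i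
  have hBU : ∀ i ∈ F, B i ⊆ U := fun i hi => Set.subset_biUnion_of_mem hi
  have hUfin : ∀ p, μ.restrict (A p) U ≠ ⊤ := fun p =>
    ne_top_of_le_ne_top (measure_biUnion_finset_le F B |>.trans_lt
      (ENNReal.sum_lt_top.2 fun i _ => hBfin i)).ne (Measure.restrict_le_self U)
  set ν : Fin m → Measure S := fun p => (μ.restrict (A p)).restrict U
  have : ∀ p, IsFiniteMeasure (ν p) := fun p => ⟨by simpa [ν] using (hUfin p).lt_top⟩
  have hint : ∀ p i j, Integrable (fun z => f i z * (starRingEnd ℂ) (f j z)) (ν p) :=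
    fun p i j => ((hf i).integrable_mul (hf j).star).restrict.restrict
  have hgram : ∀ p, ∀ i ∈ F, ∀ j,
      ∫ z, f i z * (starRingEnd ℂ) (f j z) ∂ν p = if i = j ∧ B i ⊆ A p then 1 else 0 :=
    fun p i hi => integral_restrict_restrict_mul_conj_eq_ite hnorm horth hsupp (hA p) hU
      (hBU i hi) (hcompat i p)
  have hvanish := ae_alphaDet_eq_zero_of_exists_notMem_biUnion (fun p => μ.restrict (A p)) F c
    (g := fun j z => (starRingEnd ℂ) (f j z)) (fun p i => ae_restrict_of_ae (hsupp i)) α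
  rw [integral_pi_eq_integral_pi_restrict _ (fun _ => hU) hUfin hvanish]
  simp only [alphaDet, Matrix.of_apply]
  rw [integral_finsetSum _ fun σ _ =>
    (integrable_prod_sum_sum_mul_mul ν F c σ hint).const_mul _, Finset.sum_comm]
  refine Finset.sum_congr rfl fun σ _ => ?_
  rw [integral_const_mul, integral_prod_sum_sum_mul_mul ν F c σ hint,
    sum_sum_prod_mul_prod_eq_sum_filter F c σ (fun p i => B i ⊆ A p) _ hgram, Finset.mul_sum]

/-- Finite-rank kernel form of Theorem 2.1 (equation (2.26) of the paper): the integral of the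
α-determinant of the finite-rank kernel `K'(x,y) = Σ_{i,j ∈ F} c(i,j) f_i(x) conj(f_j(y))`
over support-compatible sets `A_1 × ⋯ × A_m` equals the sum of α-determinants of the
coefficient matrix over admissible index tuples. -/
theorem stmt_11
    {S : Type*} [MeasurableSpace S] (μ : Measure S)
    {I : Type*} (f : I → S → ℂ) (hf : ∀ i, MemLp (f i) 2 μ)
    (hnorm : ∀ i, ∫ x, ‖f i x‖ ^ 2 ∂μ = 1)
    (horth : ∀ i j, i ≠ j → ∫ x, f i x * (starRingEnd ℂ) (f j x) ∂μ = 0)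
    (B : I → Set S) (hB : ∀ i, MeasurableSet (B i)) (hBfin : ∀ i, μ (B i) < ⊤)
    (hsupp : ∀ i, ∀ᵐ x ∂μ, x ∉ B i → f i x = 0)
    (m : ℕ) (hm : 1 ≤ m)
    (A : Fin m → Set S) (hA : ∀ n, MeasurableSet (A n))
    (hcompat : ∀ i n, B i ⊆ A n ∨ μ (B i ∩ A n) = 0)
    (F : Finset I) (c : I → I → ℂ) (α : ℝ) :
    ∫ x : Fin m → S,
        alphaDet α (Matrix.of fun p q : Fin m =>
          ∑ i ∈ F, ∑ j ∈ F, c i j * f i (x p) * (starRingEnd ℂ) (f j (x q)))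
        ∂(Measure.pi fun p => μ.restrict (A p))
      = ∑ i ∈ (Fintype.piFinset fun _ : Fin m => F).filter (fun i => ∀ p, B (i p) ⊆ A p),
          alphaDet α (Matrix.of fun p q : Fin m => c (i p) (i q)) :=
  stmt_11_general μ f hf hnorm horth B hB hBfin hsupp m A hA hcompat F c α
end

section
/- Let I be a countable set, let m ≥ 2, and let σ be a fixed-point-free permutation of {1,…,m}. Let J_1, …, J_m ⊆ I and let M : I × I → ℂ satisfy Σ_{(i,j) ∈ J_p × J_{σ(p)}} |M(i,j)|² < ∞ for every p = 1, …, m. Then the family ((i_1,…,i_m) ↦ ∏_{p=1}^m M(i_p, i_{σ(p)})), indexed by the m-tuples (i_1,…,i_m) ∈ J_1 × ⋯ × J_m, is absolutely summable. -/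
/-!
Put `a p x y = ‖M x y‖ₑ`. For a cycle, `∑ᵢ ∏ₚ a p (i p) (i (σ p))` is the trace of a product of
Hilbert–Schmidt matrices. Summing out one index `q` replaces `a (σ⁻¹ q)` and `a q` by their matrix
product over `J q`, which is square-summable by Cauchy–Schwarz, and `σ` by the permutation of the
remaining indices that skips `q`. Contracting a 2-cycle this way creates a fixed point `p`, whose
factor `a p (i p) (i p)` is summable (Cauchy–Schwarz again) and splits off the sum; so the induction
on the number of indices runs over all permutations, asking for summability on the diagonal at
fixed points. In `ℝ≥0∞` all these rearrangements of sums hold unconditionally.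
-/

open Equiv MeasureTheory
open scoped ENNReal

theorem ENNReal.tsum_mul_sq_le_sq_mul_sq {α : Type*} (f g : α → ℝ≥0∞) :
    (∑' x, f x * g x) ^ 2 ≤ (∑' x, f x ^ 2) * ∑' x, g x ^ 2 := by
  let _ : MeasurableSpace α := ⊤
  have holder := ENNReal.lintegral_mul_le_Lp_mul_Lq Measure.count Real.HolderConjugate.two_two
    (measurable_from_top (f := f)).aemeasurable (measurable_from_top (f := g)).aemeasurable
  simp only [lintegral_count' measurable_from_top, Pi.mul_apply, ENNReal.rpow_two] at holder
  calc (∑' x, f x * g x) ^ 2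
      ≤ ((∑' x, f x ^ 2) ^ (1 / 2 : ℝ) * (∑' x, g x ^ 2) ^ (1 / 2 : ℝ)) ^ 2 := by gcongr
    _ = (∑' x, f x ^ 2) * ∑' x, g x ^ 2 := by
      rw [mul_pow, ← ENNReal.rpow_two, ← ENNReal.rpow_two, ← ENNReal.rpow_mul, ← ENNReal.rpow_mul]
      norm_num

theorem ENNReal.tsum_mul_ne_top_of_sq_ne_top {α : Type*} {f g : α → ℝ≥0∞}
    (hf : ∑' x, f x ^ 2 ≠ ∞) (hg : ∑' x, g x ^ 2 ≠ ∞) : ∑' x, f x * g x ≠ ∞ :=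
  (pow_ne_top_iff.mp <| ne_top_of_le_ne_top (mul_ne_top hf hg)
    (tsum_mul_sq_le_sq_mul_sq f g)).resolve_right two_ne_zero

theorem ENNReal.tsum_sq_tsum_mul_le {α β γ : Type*} (f : α → β → ℝ≥0∞) (g : β → γ → ℝ≥0∞) :
    ∑' xy : α × γ, (∑' t, f xy.1 t * g t xy.2) ^ 2
      ≤ (∑' xt : α × β, f xt.1 xt.2 ^ 2) * ∑' ty : β × γ, g ty.1 ty.2 ^ 2 := by
  simp only [ENNReal.tsum_prod']
  calc ∑' (x) (y), (∑' t, f x t * g t y) ^ 2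
      ≤ ∑' (x) (y), (∑' t, f x t ^ 2) * ∑' t, g t y ^ 2 := by
        gcongr with x y; exact tsum_mul_sq_le_sq_mul_sq _ _
    _ = (∑' (x) (t), f x t ^ 2) * ∑' (t) (y), g t y ^ 2 := by
      simp only [ENNReal.tsum_mul_left, ENNReal.tsum_mul_right, ENNReal.tsum_comm (α := β)]

namespace Equiv.Perm

variable {P : Type*} [DecidableEq P]

def removeAt (σ : Perm P) (q : P) : Perm {p // p ≠ q} :=
  (swap q (σ q) * σ).subtypePerm fun _ => (swap q (σ q) * σ).injective.ne_iff' (by simp)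

theorem coe_removeAt_apply (σ : Perm P) (q : P) (p : {p // p ≠ q}) :
    (σ.removeAt q p : P) = if σ p = q then σ q else σ p := by
  have hne : σ p ≠ σ q := σ.injective.ne p.2
  simp only [removeAt, subtypePerm_apply, Perm.mul_apply, swap_apply_def]
  split_ifs <;> simp_all

theorem removeAt_apply_of_apply_ne {σ : Perm P} {q : P} {p : {p // p ≠ q}} (h : σ p ≠ q) :
    σ.removeAt q p = ⟨σ p, h⟩ :=
  Subtype.ext (by simp [coe_removeAt_apply, h])

theorem removeAt_apply_of_apply_eq {σ : Perm P} {q : P} {p : {p // p ≠ q}} (h : σ p = q) :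
    σ.removeAt q p = ⟨σ q, fun hq => p.2 (σ.injective (h.trans hq.symm))⟩ :=
  Subtype.ext (by simp [coe_removeAt_apply, h])

end Equiv.Perm

section PermTrace

variable {P I : Type*} [Fintype P] [DecidableEq P]

noncomputable def permTrace (σ : Perm P) (J : P → Set I) (a : P → I → I → ℝ≥0∞) : ℝ≥0∞ :=
  ∑' i : (p : P) → J p, ∏ p, a p (i p) (i (σ p))

noncomputable def contractKernel (σ : Perm P) (J : P → Set I) (a : P → I → I → ℝ≥0∞) (q : P) :
    {p // p ≠ q} → I → I → ℝ≥0∞ :=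
  fun p => if σ p = q then fun x y => ∑' t : J q, a p x t * a q t y else a p

omit [Fintype P] in
theorem coe_piSplitAt_symm_apply (J : P → Set I) (q : P) (t : J q)
    (i : (p : {p // p ≠ q}) → J p) (p : P) :
    ((piSplitAt q fun p => J p).symm (t, i) p : I) = if h : p = q then (t : I) else i ⟨p, h⟩ := by
  by_cases h : p = q
  · subst h; simp
  · simp [h]

variable {σ : Perm P} {J : P → Set I} {a : P → I → I → ℝ≥0∞} {q : P}

theorem permTrace_eq_tsum_tsum_piSplitAt (q : P) :
    permTrace σ J a = ∑' (i : (p : {p // p ≠ q}) → J p) (t : J q),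
      ∏ p, a p ((piSplitAt q fun p => J p).symm (t, i) p)
        ((piSplitAt q fun p => J p).symm (t, i) (σ p)) := by
  rw [permTrace, ← (piSplitAt q fun p => J p).symm.tsum_eq, ENNReal.tsum_prod', ENNReal.tsum_comm]

omit [Fintype P] in
theorem contractKernel_apply_of_apply_ne (t : J q) (i : (p : {p // p ≠ q}) → J p) {p : {p // p ≠ q}}
    (h : σ p ≠ q) :
    a p ((piSplitAt q fun p => J p).symm (t, i) p) ((piSplitAt q fun p => J p).symm (t, i) (σ p))
      = contractKernel σ J a q p (i p) (i (σ.removeAt q p)) := by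
  rw [Perm.removeAt_apply_of_apply_ne h]
  simp only [coe_piSplitAt_symm_apply, dif_neg p.2, dif_neg h, contractKernel, if_neg h]

theorem permTrace_eq_mul_permTrace_removeAt (hq : σ q = q) :
    permTrace σ J a = (∑' t : J q, a q t t) *
      permTrace (σ.removeAt q) (fun p => J p) (contractKernel σ J a q) := by
  rw [permTrace_eq_tsum_tsum_piSplitAt q, permTrace, ← ENNReal.tsum_mul_left]
  refine tsum_congr fun i => ?_
  rw [← ENNReal.tsum_mul_right]
  refine tsum_congr fun t => ?_
  rw [Fintype.prod_eq_mul_prod_subtype_ne _ q]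
  congr 1
  · simp only [coe_piSplitAt_symm_apply, hq, dite_true]
  · exact Fintype.prod_congr _ _ fun p =>
      contractKernel_apply_of_apply_ne t i fun h => p.2 (σ.injective (h.trans hq.symm))

theorem permTrace_eq_permTrace_removeAt (hq : σ q ≠ q) :
    permTrace σ J a = permTrace (σ.removeAt q) (fun p => J p) (contractKernel σ J a q) := by
  set r : {p // p ≠ q} := ⟨σ.symm q, fun h => hq (by simpa using congrArg σ h.symm)⟩
  have hr : σ r = q := σ.apply_symm_apply q
  have hrest : ∀ p ∈ ({r}ᶜ : Finset _), σ p ≠ q := fun p hp h => by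
    simp only [Finset.mem_compl, Finset.mem_singleton] at hp
    exact hp (Subtype.ext (σ.injective (h.trans hr.symm)))
  rw [permTrace_eq_tsum_tsum_piSplitAt q, permTrace]
  refine tsum_congr fun i => ?_
  calc _ = ∑' t : J q, (a r (i r) t * a q t (i ⟨σ q, hq⟩)) *
          ∏ p ∈ {r}ᶜ, contractKernel σ J a q p (i p) (i (σ.removeAt q p)) := by
        refine tsum_congr fun t => ?_
        rw [Fintype.prod_eq_mul_prod_subtype_ne _ q, Fintype.prod_eq_mul_prod_compl r,
          Finset.prod_congr rfl fun p hp => contractKernel_apply_of_apply_ne t i (hrest p hp)]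
        simp only [coe_piSplitAt_symm_apply, hr, dite_true, dif_neg hq, dif_neg r.2]
        ring
    _ = _ := by
      rw [ENNReal.tsum_mul_right, Fintype.prod_eq_mul_prod_compl r,
        Perm.removeAt_apply_of_apply_eq hr]
      simp only [contractKernel, hr, if_true]

omit [Fintype P] in
theorem contractKernel_sq_ne_top (hsq : ∀ p, σ p ≠ p → ∑' x : J p × J (σ p), a p x.1 x.2 ^ 2 ≠ ∞)
    (p : {p // p ≠ q}) (hp : σ.removeAt q p ≠ p) :
    ∑' x : J p × J (σ.removeAt q p), contractKernel σ J a q p x.1 x.2 ^ 2 ≠ ∞ := by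
  by_cases h : σ p = q
  · have hpp : σ p ≠ p := fun e => p.2 (e.symm.trans h)
    have hqq : σ q ≠ q := fun e => p.2 (σ.injective (h.trans e.symm))
    have hsqp := hsq p hpp
    rw [h] at hsqp
    rw [Perm.removeAt_apply_of_apply_eq h]
    simp only [contractKernel, h, if_true]
    exact ne_top_of_le_ne_top (ENNReal.mul_ne_top hsqp (hsq q hqq))
      (ENNReal.tsum_sq_tsum_mul_le (fun (x : J p) (t : J q) => a p x t)
        fun (t : J q) (y : J (σ q)) => a q t y)
  · rw [Perm.removeAt_apply_of_apply_ne h] at hp ⊢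
    simp only [contractKernel, h, if_false]
    exact hsq p fun e => hp (Subtype.ext e)

omit [Fintype P] in
theorem contractKernel_diag_ne_top (hsq : ∀ p, σ p ≠ p → ∑' x : J p × J (σ p), a p x.1 x.2 ^ 2 ≠ ∞)
    (hdiag : ∀ p, σ p = p → ∑' x : J p, a p x x ≠ ∞)
    (p : {p // p ≠ q}) (hp : σ.removeAt q p = p) :
    ∑' x : J p, contractKernel σ J a q p x x ≠ ∞ := by
  by_cases h : σ p = q
  · have hqp : σ q = p := congrArg Subtype.val ((Perm.removeAt_apply_of_apply_eq h).symm.trans hp)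
    have hsqp := hsq p fun e => p.2 (e.symm.trans h)
    have hsqq := hsq q fun e => p.2 (hqp.symm.trans e)
    rw [h] at hsqp
    rw [hqp, ← (Equiv.prodComm (J p) (J q)).tsum_eq] at hsqq
    simp only [contractKernel, h, if_true]
    rw [← ENNReal.tsum_prod' (f := fun x : J p × J q => a p x.1 x.2 * a q x.2 x.1)]
    exact ENNReal.tsum_mul_ne_top_of_sq_ne_top hsqp hsqq
  · rw [Perm.removeAt_apply_of_apply_ne h] at hp
    simp only [contractKernel, h, if_false]
    exact hdiag p (congrArg Subtype.val hp)

theorem permTrace_ne_top (σ : Perm P) (J : P → Set I) (a : P → I → I → ℝ≥0∞)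
    (hsq : ∀ p, σ p ≠ p → ∑' x : J p × J (σ p), a p x.1 x.2 ^ 2 ≠ ∞)
    (hdiag : ∀ p, σ p = p → ∑' x : J p, a p x x ≠ ∞) :
    permTrace σ J a ≠ ∞ := by
  induction hn : Fintype.card P generalizing P with
  | zero =>
    have : IsEmpty P := Fintype.card_eq_zero_iff.mp hn
    simp [permTrace]
  | succ n ih =>
    obtain ⟨q⟩ : Nonempty P := Fintype.card_pos_iff.mp (by omega)
    have hcut := ih (σ.removeAt q) (fun p => J p) (contractKernel σ J a q)
      (contractKernel_sq_ne_top hsq) (contractKernel_diag_ne_top hsq hdiag)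
      (by simp [Fintype.card_subtype_compl, hn])
    by_cases hq : σ q = q
    · rw [permTrace_eq_mul_permTrace_removeAt hq]
      exact ENNReal.mul_ne_top (hdiag q hq) hcut
    · rwa [permTrace_eq_permTrace_removeAt hq]

end PermTrace

theorem stmt_12_general
    {I : Type*}
    (m : ℕ)
    (σ : Equiv.Perm (Fin m)) (hσ : ∀ p, σ p ≠ p)
    (J : Fin m → Set I) (M : I → I → ℂ)
    (hM : ∀ p, Summable fun ij : J p × J (σ p) => ‖M ij.1.1 ij.2.1‖ ^ 2) :
    Summable fun i : (p : Fin m) → J p => ‖∏ p, M (i p : I) (i (σ p) : I)‖ := by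
  have hsq (p : Fin m) (_ : σ p ≠ p) : ∑' x : J p × J (σ p), ‖M x.1 x.2‖ₑ ^ 2 ≠ ∞ := by
    simpa only [ENNReal.ofReal_pow (norm_nonneg _), ofReal_norm] using (hM p).tsum_ofReal_ne_top
  refine tsum_enorm_ne_top_iff_summable_norm.mp ?_
  simpa only [permTrace, enorm_eq_nnnorm, nnnorm_prod, ENNReal.ofNNReal_finsetProd] using
    permTrace_ne_top σ J (fun _ x y => ‖M x y‖ₑ) hsq fun p hp => absurd hp (hσ p)

/-- Summability underlying equation (3.17) of the paper: for a fixed-point-free permutation `σ`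
of `{1,…,m}` and a matrix `M` which is square-summable on each rectangle `J_p × J_{σ(p)}`, the
family `(i_1,…,i_m) ↦ ∏_p M(i_p, i_{σ(p)})`, indexed by tuples in `J_1 × ⋯ × J_m`, is
absolutely summable. -/
theorem stmt_12
    {I : Type*} [Countable I]
    (m : ℕ) (hm : 2 ≤ m)
    (σ : Equiv.Perm (Fin m)) (hσ : ∀ p, σ p ≠ p)
    (J : Fin m → Set I) (M : I → I → ℂ)
    (hM : ∀ p, Summable fun ij : J p × J (σ p) => ‖M ij.1.1 ij.2.1‖ ^ 2) :
    Summable fun i : (p : Fin m) → J p => ‖∏ p, M (i p : I) (i (σ p) : I)‖ :=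
  stmt_12_general m σ hσ J M hM
end
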